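/- For each i ∈ {1,…,2m} and j ∈ {1,…,n}, the sets g_↓ ∩ T_ij and g_↓ ∩ R_ij are convex (each is a line segment on the corresponding side of the cell, possibly empty). -/

import Mathlib

open Set

noncomputable section

/-- The piecewise linear closed curve through the vertices `x 0, x 1, …`:
`f(i+α) = (1-α) • x i + α • x (i+1)`. -/
def fCurve {k : ℕ} (x : ℕ → EuclideanSpace ℝ (Fin k)) (t : ℝ) :
    EuclideanSpace ℝ (Fin k) :=
  (1 - Int.fract t) • x (⌊t⌋.toNat) + Int.fract t • x (⌊t⌋.toNat + 1)

/-- The extension of the curve from `[0,m]` to `[0,2m]` by `f(u) = f(u-m)` for `u > m`. -/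
def fCurveExt {k : ℕ} (m : ℕ) (x : ℕ → EuclideanSpace ℝ (Fin k)) (u : ℝ) :
    EuclideanSpace ℝ (Fin k) :=
  if u ≤ m then fCurve x u else fCurve x (u - m)

/-- The rectangle `D = [0,2m] × [0,n]`. -/
def Dfull (m n : ℕ) : Set (ℝ × ℝ) :=
  Icc (0:ℝ) (2*(m:ℝ)) ×ˢ Icc (0:ℝ) (n:ℝ)

/-- The free space `D_ε = {(u,v) ∈ D : dist (f_X u) (f_Y v) ≤ ε}`. -/
def Dfree {k : ℕ} (m n : ℕ) (x y : ℕ → EuclideanSpace ℝ (Fin k)) (ε : ℝ) :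
    Set (ℝ × ℝ) :=
  {p ∈ Dfull m n | dist (fCurveExt m x p.1) (fCurve y p.2) ≤ ε}

/-- The top side `T = [0,2m] × {n}` of `D`. -/
def Tside (m n : ℕ) : Set (ℝ × ℝ) := Icc (0:ℝ) (2*(m:ℝ)) ×ˢ {(n:ℝ)}

/-- The bottom side `B = [0,2m] × {0}` of `D`. -/
def Bside (m : ℕ) : Set (ℝ × ℝ) := Icc (0:ℝ) (2*(m:ℝ)) ×ˢ {(0:ℝ)}

/-- A monotone (non-decreasing) path: a connected subset `γ ⊆ Dε` with
`(u-u')·(v-v') ≥ 0` for all `(u,v), (u',v') ∈ γ`. -/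
def IsMonPath (Dε γ : Set (ℝ × ℝ)) : Prop :=
  γ ⊆ Dε ∧ IsConnected γ ∧
    ∀ p ∈ γ, ∀ q ∈ γ, (p.1 - q.1) * (p.2 - q.2) ≥ 0

/-- Two points are mutually reachable if some monotone path contains both. -/
def Reach (Dε : Set (ℝ × ℝ)) (p q : ℝ × ℝ) : Prop :=
  ∃ γ : Set (ℝ × ℝ), IsMonPath Dε γ ∧ p ∈ γ ∧ q ∈ γ

/-- `g↓`: the points of `Dε` mutually reachable with at least one point of `B`. -/
def gDown (m : ℕ) (Dε : Set (ℝ × ℝ)) : Set (ℝ × ℝ) :=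
  {p ∈ Dε | ∃ q ∈ Bside m, Reach Dε p q}

/-- `g↑`: the points of `Dε` mutually reachable with at least one point of `T`. -/
def gUp (m n : ℕ) (Dε : Set (ℝ × ℝ)) : Set (ℝ × ℝ) :=
  {p ∈ Dε | ∃ q ∈ Tside m n, Reach Dε p q}

/-- The pointer `r↑(p)`: the maximum `u* ∈ [0,2m]` such that `p` and `(u*, n)`
are mutually reachable. -/
def rUp (m n : ℕ) (Dε : Set (ℝ × ℝ)) (p : ℝ × ℝ) : ℝ :=
  sSup {u : ℝ | u ∈ Icc (0:ℝ) (2*(m:ℝ)) ∧ Reach Dε p (u, (n:ℝ))}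

/-- The pointer `r↓(p)`: for `p` with `p.2 > 0`, the maximum `u* ∈ [0,2m]` such
that `p` and `(u*, 0)` are mutually reachable; on the bottom side `r↓(u,0) = u`. -/
def rDown (m : ℕ) (Dε : Set (ℝ × ℝ)) (p : ℝ × ℝ) : ℝ :=
  if p.2 = 0 then p.1
  else sSup {u : ℝ | u ∈ Icc (0:ℝ) (2*(m:ℝ)) ∧ Reach Dε p (u, (0:ℝ))}

/-- The cell `D_ij = [i-1,i] × [j-1,j]`. -/
def cellD (i j : ℕ) : Set (ℝ × ℝ) :=
  Icc ((i:ℝ)-1) (i:ℝ) ×ˢ Icc ((j:ℝ)-1) (j:ℝ)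

/-- The top side `T_ij` of the cell `D_ij`. -/
def cellT (i j : ℕ) : Set (ℝ × ℝ) := Icc ((i:ℝ)-1) (i:ℝ) ×ˢ {(j:ℝ)}

/-- The bottom side `B_ij` of the cell `D_ij`. -/
def cellB (i j : ℕ) : Set (ℝ × ℝ) := Icc ((i:ℝ)-1) (i:ℝ) ×ˢ {((j:ℝ)-1)}

/-- The right side `R_ij` of the cell `D_ij`. -/
def cellR (i j : ℕ) : Set (ℝ × ℝ) := {(i:ℝ)} ×ˢ Icc ((j:ℝ)-1) (j:ℝ)

/-- The left side `L_ij` of the cell `D_ij`. -/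
def cellL (i j : ℕ) : Set (ℝ × ℝ) := {((i:ℝ)-1)} ×ˢ Icc ((j:ℝ)-1) (j:ℝ)

/-- The partial order `≼` on `D`: `(u1,v1) ≼ (u2,v2)` iff `u1 ≤ u2` and `v1 ≥ v2`. -/
def prec (p q : ℝ × ℝ) : Prop := p.1 ≤ q.1 ∧ q.2 ≤ p.2

/-!
Along a side `C` of a cell one curve stays at a point and the other moves affinely, so the free
space `D_ε ∩ C` is a sublevel set of a convex function, hence convex. A monotone path is a
connected chain for the componentwise order on `ℝ × ℝ`, and the cell sides are chains too. If
`p ≤ z` both lie in `D_ε ∩ C` and `p ∈ g_↓`, then a path from the bottom side to `p`, cut off at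
`p` and continued along the segment `[p, z] ⊆ D_ε`, is again monotone; so `z ∈ g_↓`, and this gives
convexity of `g_↓ ∩ C`.
-/

section Affine

variable {k : ℕ}

lemma fCurve_eq_lineMap (x : ℕ → EuclideanSpace ℝ (Fin k)) (a : ℕ) {t : ℝ}
    (ht : t ∈ Icc (a : ℝ) (a + 1)) :
    fCurve x t = AffineMap.lineMap (x a) (x (a + 1)) (t - a) := by
  rw [AffineMap.lineMap_apply_module]
  rcases ht.2.eq_or_lt with rfl | hlt
  · rw [fCurve, show (a : ℝ) + 1 = ((a + 1 : ℕ) : ℝ) by push_cast; ring, Int.fract_natCast,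
      Int.floor_natCast, Int.toNat_natCast]
    simp
  · have hfloor : ⌊t⌋ = a := Int.floor_eq_iff.2 ⟨mod_cast ht.1, by push_cast; linarith⟩
    rw [fCurve, Int.fract, hfloor, Int.toNat_natCast, Int.cast_natCast]

lemma exists_affineMap_eqOn_fCurve (x : ℕ → EuclideanSpace ℝ (Fin k)) (a : ℕ) (c : ℝ) :
    ∃ φ : ℝ →ᵃ[ℝ] EuclideanSpace ℝ (Fin k),
      EqOn (fun t ↦ fCurve x (t - c)) φ (Icc (a + c) (a + 1 + c)) :=
  ⟨(AffineMap.lineMap (x a) (x (a + 1))).comp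
      (AffineEquiv.vaddConst ℝ ((a : ℝ) + c)).symm.toAffineMap, fun t ht ↦ by
    show fCurve x (t - c) = _
    rw [fCurve_eq_lineMap x a ⟨by linarith [ht.1], by linarith [ht.2]⟩]
    simp [sub_sub, add_comm]⟩

lemma fCurveExt_eqOn_of_le (m : ℕ) (x : ℕ → EuclideanSpace ℝ (Fin k)) :
    EqOn (fCurveExt m x) (fCurve x) (Iic (m : ℝ)) := fun u hu ↦ by
  simp [fCurveExt, show u ≤ m from hu]

-- At the seam `u = m` the two pieces of `fCurveExt` agree only because the curve is closed.
lemma fCurveExt_eqOn_of_ge {m : ℕ} {x : ℕ → EuclideanSpace ℝ (Fin k)} (hx : x m = x 0) :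
    EqOn (fCurveExt m x) (fun u ↦ fCurve x (u - m)) (Ici (m : ℝ)) := by
  intro u hu
  rcases (show (m : ℝ) ≤ u from hu).eq_or_lt with rfl | hlt
  · have h0 := fCurve_eq_lineMap x 0 (t := 0) (by simp)
    have hm := fCurve_eq_lineMap x m (t := m) (by simp)
    simp_all [fCurveExt]
  · simp [fCurveExt, not_le.2 hlt]

lemma exists_affineMap_eqOn_fCurveExt {m : ℕ} {x : ℕ → EuclideanSpace ℝ (Fin k)}
    (hx : x m = x 0) {i : ℕ} (hi : 1 ≤ i) :
    ∃ φ : ℝ →ᵃ[ℝ] EuclideanSpace ℝ (Fin k), EqOn (fCurveExt m x) φ (Icc ((i : ℝ) - 1) i) := by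
  rcases le_or_gt i m with him | hmi
  · obtain ⟨φ, hφ⟩ := exists_affineMap_eqOn_fCurve x (i - 1) 0
    refine ⟨φ, fun u hu ↦ ?_⟩
    have hu' : u ∈ Icc (((i - 1 : ℕ) : ℝ) + 0) ((i - 1 : ℕ) + 1 + 0) := by
      push_cast [Nat.cast_sub hi]; simpa using hu
    rw [fCurveExt_eqOn_of_le m x (hu.2.trans (by exact_mod_cast him))]
    simpa using hφ hu'
  · obtain ⟨φ, hφ⟩ := exists_affineMap_eqOn_fCurve x (i - 1 - m) m
    refine ⟨φ, fun u hu ↦ ?_⟩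
    have hu' : u ∈ Icc (((i - 1 - m : ℕ) : ℝ) + m) ((i - 1 - m : ℕ) + 1 + m) := by
      push_cast [Nat.cast_sub hi, Nat.cast_sub (Nat.le_sub_one_of_lt hmi)]
      constructor <;> linarith [hu.1, hu.2]
    have hmu : (m : ℝ) ≤ u := by
      have : (m : ℝ) + 1 ≤ i := by exact_mod_cast hmi
      linarith [hu.1]
    rw [fCurveExt_eqOn_of_ge hx hmu, hφ hu']

end Affine

lemma Convex.sep_dist_le_of_eqOn {V E : Type*} [AddCommGroup V] [Module ℝ V]
    [NormedAddCommGroup E] [NormedSpace ℝ E] {s : Set V} (hs : Convex ℝ s) {F G : V → E}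
    {φ ψ : V →ᵃ[ℝ] E} (hF : EqOn F φ s) (hG : EqOn G ψ s) (ε : ℝ) :
    Convex ℝ {p ∈ s | dist (F p) (G p) ≤ ε} := by
  have hconv : ConvexOn ℝ s (fun p ↦ dist (F p) (G p)) :=
    (((convexOn_norm convex_univ).comp_affineMap (φ - ψ)).subset (subset_univ s) hs).congr
      fun p hp ↦ by simp [hF hp, hG hp, dist_eq_norm]
  exact hconv.convex_le ε

section FreeSpace

variable {k m n : ℕ} {x y : ℕ → EuclideanSpace ℝ (Fin k)} {ε : ℝ}

lemma convex_Dfree_inter {C : Set (ℝ × ℝ)} (hC : Convex ℝ C)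
    {φ ψ : ℝ × ℝ →ᵃ[ℝ] EuclideanSpace ℝ (Fin k)} (hφ : EqOn (fun p ↦ fCurveExt m x p.1) φ C)
    (hψ : EqOn (fun p ↦ fCurve y p.2) ψ C) :
    Convex ℝ (Dfree m n x y ε ∩ C) := by
  have hDC : Convex ℝ (Dfull m n ∩ C) := ((convex_Icc _ _).prod (convex_Icc _ _)).inter hC
  have hsep : Dfree m n x y ε ∩ C =
      {p ∈ Dfull m n ∩ C | dist (fCurveExt m x p.1) (fCurve y p.2) ≤ ε} := by
    ext p
    exact and_right_comm
  rw [hsep]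
  exact hDC.sep_dist_le_of_eqOn (hφ.mono inter_subset_right) (hψ.mono inter_subset_right) ε

lemma convex_Dfree_inter_cellT (hx : x m = x 0) {i : ℕ} (hi : 1 ≤ i) (j : ℕ) :
    Convex ℝ (Dfree m n x y ε ∩ cellT i j) := by
  obtain ⟨φ, hφ⟩ := exists_affineMap_eqOn_fCurveExt hx hi
  refine convex_Dfree_inter ((convex_Icc _ _).prod (convex_singleton _))
    (φ := φ.comp (AffineMap.fst)) (ψ := AffineMap.const ℝ _ (fCurve y j)) ?_ ?_
  · exact fun p hp ↦ hφ hp.1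
  · rintro p ⟨-, hp⟩
    simp [mem_singleton_iff.1 hp]

lemma convex_Dfree_inter_cellR (i : ℕ) {j : ℕ} (hj : 1 ≤ j) :
    Convex ℝ (Dfree m n x y ε ∩ cellR i j) := by
  obtain ⟨ψ, hψ⟩ := exists_affineMap_eqOn_fCurve y (j - 1) 0
  refine convex_Dfree_inter ((convex_singleton _).prod (convex_Icc _ _))
    (φ := AffineMap.const ℝ _ (fCurveExt m x i)) (ψ := ψ.comp (AffineMap.snd)) ?_ ?_
  · rintro p ⟨hp, -⟩
    simp [mem_singleton_iff.1 hp]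
  · rintro p ⟨-, hp⟩
    have hp' : p.2 ∈ Icc (((j - 1 : ℕ) : ℝ) + 0) ((j - 1 : ℕ) + 1 + 0) := by
      push_cast [Nat.cast_sub hj]; simpa using hp
    simpa using hψ hp'

end FreeSpace

section MonotonePath

lemma mul_sub_nonneg_iff_le_or_le (p q : ℝ × ℝ) :
    0 ≤ (p.1 - q.1) * (p.2 - q.2) ↔ p ≤ q ∨ q ≤ p := by
  simp only [mul_nonneg_iff, sub_nonneg, sub_nonpos, Prod.le_def]
  tauto

lemma isMonPath_iff {Dε γ : Set (ℝ × ℝ)} :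
    IsMonPath Dε γ ↔ γ ⊆ Dε ∧ IsConnected γ ∧ IsChain (· ≤ ·) γ := by
  simp only [IsMonPath, ge_iff_le, mul_sub_nonneg_iff_le_or_le]
  exact and_congr_right' <| and_congr_right' ⟨fun h p hp q hq _ ↦ h p hp q hq,
    fun h p hp q hq ↦ (eq_or_ne p q).elim (fun hpq ↦ .inl hpq.le) (h hp hq)⟩

-- Clamping by `p` maps a chain through `p` onto its part below `p`.
lemma IsConnected.inter_Iic_of_isChain {γ : Set (ℝ × ℝ)} (hγ : IsConnected γ)
    (hchain : IsChain (· ≤ ·) γ) {p : ℝ × ℝ} (hp : p ∈ γ) : IsConnected (γ ∩ Iic p) := by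
  have himage : (fun a ↦ a ⊓ p) '' γ = γ ∩ Iic p := by
    apply Subset.antisymm
    · rintro _ ⟨a, ha, rfl⟩
      refine ⟨?_, show a ⊓ p ≤ p from inf_le_right⟩
      rcases hchain.total ha hp with hap | hpa
      · exact show a ⊓ p ∈ γ by rwa [inf_eq_left.2 hap]
      · exact show a ⊓ p ∈ γ by rwa [inf_eq_right.2 hpa]
    · exact fun a ha ↦ ⟨a, ha.1, inf_eq_left.2 ha.2⟩
  rw [← himage]
  exact hγ.image _ ((continuous_fst.inf continuous_const).prodMk
    (continuous_snd.inf continuous_const)).continuousOn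

lemma isChain_segment {p z : ℝ × ℝ} (h : p ≤ z) : IsChain (· ≤ ·) (segment ℝ p z) := by
  have hmono : Monotone (AffineMap.lineMap p z : ℝ → ℝ × ℝ) := fun r r' hr ↦ by
    simp only [AffineMap.lineMap_apply_module']
    gcongr
  rw [segment_eq_image_lineMap]
  exact hmono.isChain_range.mono (image_subset_range _ _)

lemma reach_of_segment_subset {Dε γ : Set (ℝ × ℝ)} (hγ : IsMonPath Dε γ) {b p z : ℝ × ℝ}
    (hb : b ∈ γ) (hp : p ∈ γ) (hbp : b ≤ p) (hpz : p ≤ z) (hseg : segment ℝ p z ⊆ Dε) :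
    Reach Dε z b := by
  obtain ⟨hγD, hγconn, hγchain⟩ := isMonPath_iff.1 hγ
  refine ⟨γ ∩ Iic p ∪ segment ℝ p z, isMonPath_iff.2 ⟨?_, ?_, ?_⟩,
    .inr (right_mem_segment ℝ p z), .inl ⟨hb, hbp⟩⟩
  · exact union_subset (inter_subset_left.trans hγD) hseg
  · exact (hγconn.inter_Iic_of_isChain hγchain hp).union ⟨p, ⟨hp, mem_Iic.2 le_rfl⟩, left_mem_segment ℝ p z⟩
      ((convex_segment p z).isConnected ⟨p, left_mem_segment ℝ p z⟩)
  · refine isChain_union.2 ⟨hγchain.mono inter_subset_left, isChain_segment hpz, ?_⟩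
    exact fun c hc d hd _ ↦ .inl (hc.2.trans (segment_subset_Icc hpz hd).1)

end MonotonePath

section Reachable

variable {m n : ℕ} {Dε : Set (ℝ × ℝ)}

lemma exists_le_of_mem_gDown (hD : Dε ⊆ Dfull m n) {p : ℝ × ℝ} (hp : p ∈ gDown m Dε) :
    ∃ b ∈ Bside m, ∃ γ, IsMonPath Dε γ ∧ b ∈ γ ∧ p ∈ γ ∧ b ≤ p := by
  obtain ⟨hpD, b, hb, γ, hγ, hpγ, hbγ⟩ := hp
  rcases (isMonPath_iff.1 hγ).2.2.total hbγ hpγ with hbp | hpb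
  · exact ⟨b, hb, γ, hγ, hbγ, hpγ, hbp⟩
  · obtain ⟨hp1, hp2⟩ := hD hpD
    have hp0 : p.2 = 0 := le_antisymm ((mem_singleton_iff.1 hb.2) ▸ hpb.2) hp2.1
    exact ⟨p, ⟨hp1, hp0⟩, γ, hγ, hpγ, hpγ, le_rfl⟩

lemma mem_gDown_of_segment_subset (hD : Dε ⊆ Dfull m n) {p z : ℝ × ℝ} (hp : p ∈ gDown m Dε)
    (hpz : p ≤ z) (hseg : segment ℝ p z ⊆ Dε) : z ∈ gDown m Dε := by
  obtain ⟨b, hb, γ, hγ, hbγ, hpγ, hbp⟩ := exists_le_of_mem_gDown hD hp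
  exact ⟨hseg (right_mem_segment ℝ p z), b, hb, reach_of_segment_subset hγ hbγ hpγ hbp hpz hseg⟩

lemma convex_gDown_inter (hD : Dε ⊆ Dfull m n) {C : Set (ℝ × ℝ)} (hC : Convex ℝ (Dε ∩ C))
    (hchain : IsChain (· ≤ ·) C) : Convex ℝ (gDown m Dε ∩ C) := by
  suffices h : ∀ ⦃p q⦄, p ∈ gDown m Dε ∩ C → q ∈ gDown m Dε ∩ C → p ≤ q →
      segment ℝ p q ⊆ gDown m Dε ∩ C by
    refine convex_iff_segment_subset.2 fun p hp q hq ↦ ?_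
    rcases hchain.total hp.2 hq.2 with hpq | hqp
    · exact h hp hq hpq
    · exact segment_symm ℝ p q ▸ h hq hp hqp
  intro p q hp hq hpq z hz
  have hpqC : segment ℝ p q ⊆ Dε ∩ C := hC.segment_subset ⟨hp.1.1, hp.2⟩ ⟨hq.1.1, hq.2⟩
  have hpz : segment ℝ p z ⊆ Dε ∩ C :=
    ((convex_segment p q).segment_subset (left_mem_segment ℝ p q) hz).trans hpqC
  exact ⟨mem_gDown_of_segment_subset hD hp.1 (segment_subset_Icc hpq hz).1
    (hpz.trans inter_subset_left), (hpqC hz).2⟩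

end Reachable

lemma isChain_cellT (i j : ℕ) : IsChain (· ≤ ·) (cellT i j) := by
  rintro p ⟨-, hp⟩ q ⟨-, hq⟩ -
  rw [mem_singleton_iff] at hp hq
  simp only [Prod.le_def, hp, hq, le_rfl, and_true]
  exact le_total _ _

lemma isChain_cellR (i j : ℕ) : IsChain (· ≤ ·) (cellR i j) := by
  rintro p ⟨hp, -⟩ q ⟨hq, -⟩ -
  rw [mem_singleton_iff] at hp hq
  simp only [Prod.le_def, hp, hq, le_rfl, true_and]
  exact le_total _ _

lemma Dfree_subset_Dfull {k : ℕ} (m n : ℕ) (x y : ℕ → EuclideanSpace ℝ (Fin k)) (ε : ℝ) :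
    Dfree m n x y ε ⊆ Dfull m n :=
  fun _ hp ↦ hp.1

theorem stmt9_general
    (k m n : ℕ)
    (x y : ℕ → EuclideanSpace ℝ (Fin k)) (hx : x m = x 0)
    (ε : ℝ)
    (Dε : Set (ℝ × ℝ)) (hDε : Dε = Dfree m n x y ε)
    (i j : ℕ) (hi1 : 1 ≤ i) (hj1 : 1 ≤ j) :
    Convex ℝ (gDown m Dε ∩ cellT i j) ∧ Convex ℝ (gDown m Dε ∩ cellR i j) := by
  subst hDε
  exact ⟨convex_gDown_inter (Dfree_subset_Dfull m n x y ε)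
      (convex_Dfree_inter_cellT hx hi1 j) (isChain_cellT i j),
    convex_gDown_inter (Dfree_subset_Dfull m n x y ε)
      (convex_Dfree_inter_cellR i hj1) (isChain_cellR i j)⟩

theorem stmt9
    (k m n : ℕ) (hk : 1 ≤ k) (hm : 1 ≤ m) (hn : 1 ≤ n)
    (x y : ℕ → EuclideanSpace ℝ (Fin k)) (hx : x m = x 0) (hy : y n = y 0)
    (ε : ℝ) (hε : 0 ≤ ε)
    (Dε : Set (ℝ × ℝ)) (hDε : Dε = Dfree m n x y ε)
    (i j : ℕ) (hi1 : 1 ≤ i) (hi2 : i ≤ 2*m) (hj1 : 1 ≤ j) (hj2 : j ≤ n) :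
    Convex ℝ (gDown m Dε ∩ cellT i j) ∧ Convex ℝ (gDown m Dε ∩ cellR i j) :=
  stmt9_general k m n x y hx ε Dε hDε i j hi1 hj1
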